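/- The quartic/linear interpolation kernel S¹_{4/1} with parameters a₀₁ > -1 and a₀₂ is C¹ continuous on ℝ, and its derivative at t = 1 equals 0. -/

import Mathlib

/-!
On `[0, ∞)` the kernel consists of two rational pieces, `S41aInner` on `[0, 1]` and `S41aOuter` on
`[1, 2]`, followed by zero. Both pieces carry the factor `(1 - s)²` and the outer one also
`(2 - s)²`, so at the knots `1` and `2` adjacent pieces agree to first order, and at `0` the inner
piece has a critical point, which is what an even function needs there. A function glued from
two `C¹` pieces whose values and derivatives agree at the knot is `C¹`; the hypothesis
`-1 < a1` keeps both denominators away from zero on their intervals.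
-/

open Set Filter Topology

noncomputable def S41a (a1 a2 t : ℝ) : ℝ :=
  if |t| < 1 then
    (1 - |t|) ^ 2 * (1 + (2 + a1) * |t| + (3 + 2 * a1 + a2) * |t| ^ 2) / (1 + a1 * |t|)
  else if |t| < 2 then
    (2 - |t|) ^ 2 * (1 - |t|) ^ 2 * (3 + a2) / (-1 - 2 * a1 + a1 * |t|)
  else 0

section Calculus

variable {𝕜 : Type*} [NontriviallyNormedField 𝕜] {F : Type*} [NormedAddCommGroup F]
  [NormedSpace 𝕜 F]

theorem DifferentiableAt.hasDerivAt_sub_sq_mul {h : 𝕜 → 𝕜} {c : 𝕜}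
    (hh : DifferentiableAt 𝕜 h c) : HasDerivAt (fun s => (c - s) ^ 2 * h s) 0 c := by
  simpa using (((hasDerivAt_id' c).const_sub c).fun_pow 2).fun_mul hh.hasDerivAt

theorem ContDiffAt.continuousAt_deriv {f : 𝕜 → F} {x : 𝕜} (h : ContDiffAt 𝕜 1 f x) :
    ContinuousAt (deriv f) x :=
  (h.derivWithin (m := 0) le_rfl).continuousAt

theorem contDiffAt_one_of_eventually_differentiableAt {f : 𝕜 → F} {a : 𝕜}
    (h : ∀ᶠ x in 𝓝 a, DifferentiableAt 𝕜 f x ∧ ContinuousAt (deriv f) x) :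
    ContDiffAt 𝕜 1 f a := by
  obtain ⟨U, hU, hUo, haU⟩ := eventually_nhds_iff.1 h
  refine ContDiffOn.contDiffAt ?_ (hUo.mem_nhds haU)
  rw [show (1 : WithTop ℕ∞) = 0 + 1 from rfl, contDiffOn_succ_iff_deriv_of_isOpen hUo]
  exact ⟨fun x hx => (hU x hx).1.differentiableWithinAt, by simp,
    contDiffOn_zero.2 fun x hx => (hU x hx).2.continuousWithinAt⟩

theorem IsOpen.eventually_eventuallyEq_nhds {X Y : Type*} [TopologicalSpace X] {s : Set X}
    {f g : X → Y} {a : X} (hs : IsOpen s) (h : f =ᶠ[𝓝[s] a] g) :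
    ∀ᶠ y in 𝓝[s] a, f =ᶠ[𝓝 y] g := by
  filter_upwards [eventually_eventually_nhdsWithin.2 h, self_mem_nhdsWithin] with y hy hys
  rwa [hs.nhdsWithin_eq hys] at hy

end Calculus

section Gluing

variable {f u v : ℝ → ℝ} {a d : ℝ}

theorem HasDerivAt.of_eventuallyEq_left_right (hu : HasDerivAt u d a) (hv : HasDerivAt v d a)
    (hfu : f =ᶠ[𝓝[≤] a] u) (hfv : f =ᶠ[𝓝[≥] a] v) : HasDerivAt f d a := by
  have hl := hu.hasDerivWithinAt.congr_of_eventuallyEq hfu (hfu.eq_of_nhdsWithin self_mem_Iic)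
  have hr := hv.hasDerivWithinAt.congr_of_eventuallyEq hfv (hfv.eq_of_nhdsWithin self_mem_Ici)
  simpa [Iic_union_Ici] using hl.union hr

theorem contDiffAt_one_of_eventuallyEq_left_right (hu : ContDiffAt ℝ 1 u a)
    (hv : ContDiffAt ℝ 1 v a) (hfu : f =ᶠ[𝓝[≤] a] u) (hfv : f =ᶠ[𝓝[≥] a] v)
    (hd : deriv u a = deriv v a) : ContDiffAt ℝ 1 f a := by
  have hfa : HasDerivAt f (deriv u a) a :=
    .of_eventuallyEq_left_right hu.differentiableAt_one.hasDerivAt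
      (hd ▸ hv.differentiableAt_one.hasDerivAt) hfu hfv
  have hl := isOpen_Iio.eventually_eventuallyEq_nhds
    (hfu.filter_mono (nhdsWithin_mono _ Iio_subset_Iic_self))
  have hr := isOpen_Ioi.eventually_eventuallyEq_nhds
    (hfv.filter_mono (nhdsWithin_mono _ Ioi_subset_Ici_self))
  have hcont : ContinuousAt (deriv f) a := continuousAt_iff_continuous_left'_right'.2
    ⟨hu.continuousAt_deriv.continuousWithinAt.congr_of_eventuallyEq
      (hl.mono fun _ h => h.deriv_eq) hfa.deriv,
     hv.continuousAt_deriv.continuousWithinAt.congr_of_eventuallyEq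
      (hr.mono fun _ h => h.deriv_eq) (hfa.deriv.trans hd)⟩
  have hu' := eventually_nhdsWithin_of_eventually_nhds (s := Iio a) (hu.eventually (by simp))
  have hv' := eventually_nhdsWithin_of_eventually_nhds (s := Ioi a) (hv.eventually (by simp))
  refine contDiffAt_one_of_eventually_differentiableAt ?_
  rw [← nhdsNE_sup_pure a, ← nhdsLT_sup_nhdsGT, eventually_sup, eventually_sup, eventually_pure]
  refine ⟨⟨?_, ?_⟩, hfa.differentiableAt, hcont⟩
  · filter_upwards [hl, hu'] with x hfx hux
    have hfx := hux.congr_of_eventuallyEq hfx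
    exact ⟨hfx.differentiableAt_one, hfx.continuousAt_deriv⟩
  · filter_upwards [hr, hv'] with x hfx hvx
    have hfx := hvx.congr_of_eventuallyEq hfx
    exact ⟨hfx.differentiableAt_one, hfx.continuousAt_deriv⟩

theorem Function.Even.contDiffAt_zero_of_eventuallyEq (hf : Function.Even f)
    (hu : ContDiffAt ℝ 1 u 0) (hfu : f =ᶠ[𝓝[≥] 0] u) (hd : deriv u 0 = 0) :
    ContDiffAt ℝ 1 f 0 := by
  have hneg : Tendsto (fun x : ℝ => -x) (𝓝[≤] 0) (𝓝[≥] 0) :=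
    tendsto_nhdsWithin_of_tendsto_nhds_of_eventually_within _
      (by simpa using (continuous_neg.tendsto (0 : ℝ)).mono_left nhdsWithin_le_nhds)
      (eventually_nhdsWithin_of_forall fun _ hx => mem_Ici.2 (neg_nonneg.2 hx))
  refine contDiffAt_one_of_eventuallyEq_left_right (u := fun x => u (-x)) ?_ hu ?_ hfu ?_
  · exact (neg_zero (G := ℝ) ▸ hu).comp 0 contDiff_neg.contDiffAt
  · filter_upwards [hneg.eventually hfu] with x hx
    rw [← hx, hf]
  · rw [deriv_comp_neg, neg_zero, hd, neg_zero]

end Gluing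

noncomputable def S41aInner (a1 a2 s : ℝ) : ℝ :=
  (1 - s) ^ 2 * (1 + (2 + a1) * s + (3 + 2 * a1 + a2) * s ^ 2) / (1 + a1 * s)

noncomputable def S41aOuter (a1 a2 s : ℝ) : ℝ :=
  (2 - s) ^ 2 * (1 - s) ^ 2 * (3 + a2) / (-1 - 2 * a1 + a1 * s)

section Kernel

variable {a1 a2 t : ℝ}

theorem S41a_inner_denom_pos (ha1 : -1 < a1) (h0 : 0 ≤ t) (h1 : t ≤ 1) : 0 < 1 + a1 * t := by
  rcases le_total 0 a1 with ha | ha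
  · nlinarith [mul_nonneg ha h0]
  · nlinarith [mul_nonneg (neg_nonneg.2 ha) (sub_nonneg.2 h1)]

theorem S41a_outer_denom_neg (ha1 : -1 < a1) (h1 : 1 ≤ t) (h2 : t ≤ 2) :
    -1 - 2 * a1 + a1 * t < 0 := by
  linarith [S41a_inner_denom_pos ha1 (sub_nonneg.2 h2) (by linarith : 2 - t ≤ 1)]

theorem S41a_contDiffAt_inner (h : 1 + a1 * t ≠ 0) : ContDiffAt ℝ 1 (S41aInner a1 a2) t :=
  ContDiffAt.div (by fun_prop) (by fun_prop) h

theorem S41a_contDiffAt_outer (h : -1 - 2 * a1 + a1 * t ≠ 0) :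
    ContDiffAt ℝ 1 (S41aOuter a1 a2) t :=
  ContDiffAt.div (by fun_prop) (by fun_prop) h

theorem S41a_hasDerivAt_inner_zero : HasDerivAt (S41aInner a1 a2) 0 0 := by
  have hN := (((hasDerivAt_id' (0 : ℝ)).const_sub 1).fun_pow 2).fun_mul
    ((((hasDerivAt_id' (0 : ℝ)).const_mul (2 + a1)).const_add 1).fun_add
      ((hasDerivAt_pow 2 (0 : ℝ)).const_mul (3 + 2 * a1 + a2)))
  have hD := ((hasDerivAt_id' (0 : ℝ)).const_mul a1).const_add 1
  exact (hN.fun_div hD (by simp)).congr_deriv (by norm_num)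

theorem S41a_hasDerivAt_inner_one (ha1 : -1 < a1) : HasDerivAt (S41aInner a1 a2) 0 1 := by
  have h : S41aInner a1 a2 = fun s =>
      (1 - s) ^ 2 * ((1 + (2 + a1) * s + (3 + 2 * a1 + a2) * s ^ 2) / (1 + a1 * s)) := by
    ext s; exact mul_div_assoc ..
  rw [h]
  exact (DifferentiableAt.div (by fun_prop) (by fun_prop) (by linarith)).hasDerivAt_sub_sq_mul

theorem S41a_hasDerivAt_outer_one (ha1 : -1 < a1) : HasDerivAt (S41aOuter a1 a2) 0 1 := by
  have h : S41aOuter a1 a2 = fun s =>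
      (1 - s) ^ 2 * ((2 - s) ^ 2 * (3 + a2) / (-1 - 2 * a1 + a1 * s)) := by
    ext s; simp only [S41aOuter]; ring
  rw [h]
  exact (DifferentiableAt.div (by fun_prop) (by fun_prop) (by linarith)).hasDerivAt_sub_sq_mul

theorem S41a_hasDerivAt_outer_two : HasDerivAt (S41aOuter a1 a2) 0 2 := by
  have h : S41aOuter a1 a2 = fun s =>
      (2 - s) ^ 2 * ((1 - s) ^ 2 * (3 + a2) / (-1 - 2 * a1 + a1 * s)) := by
    ext s; simp only [S41aOuter]; ring
  rw [h]
  exact (DifferentiableAt.div (by fun_prop) (by fun_prop) (by linarith)).hasDerivAt_sub_sq_mul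

theorem S41a_even : Function.Even (S41a a1 a2) := fun t => by
  rw [S41a, S41a, abs_neg]

theorem S41a_eqOn_inner : EqOn (S41a a1 a2) (S41aInner a1 a2) (Icc 0 1) := by
  rintro t ⟨h0, h1⟩
  rcases h1.lt_or_eq with h1 | rfl
  · simp [S41a, S41aInner, abs_of_nonneg h0, h1]
  · simp [S41a, S41aInner]

theorem S41a_eqOn_outer : EqOn (S41a a1 a2) (S41aOuter a1 a2) (Icc 1 2) := by
  rintro t ⟨h1, h2⟩
  rcases h2.lt_or_eq with h2 | rfl
  · simp [S41a, S41aOuter, abs_of_nonneg (zero_le_one.trans h1), h1.not_gt, h2]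
  · norm_num [S41a, S41aOuter]

theorem S41a_eqOn_zero : EqOn (S41a a1 a2) 0 (Ici 2) := by
  intro t (h2 : 2 ≤ t)
  simp [S41a, abs_of_nonneg (zero_le_two.trans h2), h2.not_gt, (one_lt_two.trans_le h2).not_gt]

theorem S41a_hasDerivAt_one (ha1 : -1 < a1) : HasDerivAt (S41a a1 a2) 0 1 :=
  .of_eventuallyEq_left_right (S41a_hasDerivAt_inner_one ha1) (S41a_hasDerivAt_outer_one ha1)
    (eventuallyEq_of_mem (Icc_mem_nhdsLE zero_lt_one) S41a_eqOn_inner)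
    (eventuallyEq_of_mem (Icc_mem_nhdsGE one_lt_two) S41a_eqOn_outer)

theorem S41a_contDiffAt_of_nonneg (ha1 : -1 < a1) (ht : 0 ≤ t) :
    ContDiffAt ℝ 1 (S41a a1 a2) t := by
  rcases ht.eq_or_lt with rfl | ht0
  · exact S41a_even.contDiffAt_zero_of_eventuallyEq (S41a_contDiffAt_inner (by simp))
      (eventuallyEq_of_mem (Icc_mem_nhdsGE zero_lt_one) S41a_eqOn_inner)
      S41a_hasDerivAt_inner_zero.deriv
  rcases lt_trichotomy t 1 with h1 | rfl | h1
  · exact (S41a_contDiffAt_inner (S41a_inner_denom_pos ha1 ht h1.le).ne').congr_of_eventuallyEq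
      (eventuallyEq_of_mem (Ioo_mem_nhds ht0 h1) fun s hs => S41a_eqOn_inner ⟨hs.1.le, hs.2.le⟩)
  · exact contDiffAt_one_of_eventuallyEq_left_right
      (S41a_contDiffAt_inner (S41a_inner_denom_pos ha1 zero_le_one le_rfl).ne')
      (S41a_contDiffAt_outer (S41a_outer_denom_neg ha1 le_rfl one_le_two).ne)
      (eventuallyEq_of_mem (Icc_mem_nhdsLE zero_lt_one) S41a_eqOn_inner)
      (eventuallyEq_of_mem (Icc_mem_nhdsGE one_lt_two) S41a_eqOn_outer)
      ((S41a_hasDerivAt_inner_one ha1).deriv.trans (S41a_hasDerivAt_outer_one ha1).deriv.symm)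
  rcases lt_trichotomy t 2 with h2 | rfl | h2
  · exact (S41a_contDiffAt_outer (S41a_outer_denom_neg ha1 h1.le h2.le).ne).congr_of_eventuallyEq
      (eventuallyEq_of_mem (Ioo_mem_nhds h1 h2) fun s hs => S41a_eqOn_outer ⟨hs.1.le, hs.2.le⟩)
  · exact contDiffAt_one_of_eventuallyEq_left_right
      (S41a_contDiffAt_outer (S41a_outer_denom_neg ha1 one_le_two le_rfl).ne) contDiffAt_const
      (eventuallyEq_of_mem (Icc_mem_nhdsLE one_lt_two) S41a_eqOn_outer)
      (eventuallyEq_of_mem self_mem_nhdsWithin S41a_eqOn_zero)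
      (S41a_hasDerivAt_outer_two.deriv.trans (deriv_const _ _).symm)
  · exact contDiffAt_const.congr_of_eventuallyEq
      (eventuallyEq_of_mem (Ioi_mem_nhds h2) fun s hs => S41a_eqOn_zero (mem_Ioi.1 hs).le)

theorem S41a_contDiff (ha1 : -1 < a1) : ContDiff ℝ 1 (S41a a1 a2) := by
  refine contDiff_iff_contDiffAt.2 fun t => ?_
  rcases le_total 0 t with ht | ht
  · exact S41a_contDiffAt_of_nonneg ha1 ht
  · have h := (S41a_contDiffAt_of_nonneg (a2 := a2) ha1 (neg_nonneg.2 ht)).comp t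
      contDiff_neg.contDiffAt
    simpa [Function.comp_def, S41a_even _] using h

end Kernel

theorem S41a_C1 (a1 a2 : ℝ) (ha1 : -1 < a1) :
    ContDiff ℝ 1 (S41a a1 a2) ∧ deriv (S41a a1 a2) 1 = 0 :=
  ⟨S41a_contDiff ha1, (S41a_hasDerivAt_one ha1).deriv⟩
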